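/- Define S(x) := Σ_{a=0}^∞ wal_{2^a}(x) · 2^{−3a} = Σ_{a=0}^∞ (−1)^{x_{a+1}} 2^{−3a} for x ∈ [0,1). Then for every dyadic rational x ∈ [0,1), the right derivative of S at x is 0, i.e., lim_{h → 0⁺} (S(x + h) − S(x))/h = 0; and for every dyadic rational x ∈ (0,1), (S(x) − S(x − h))/h → −∞ as h → 0⁺. -/

import Mathlib

noncomputable def binDigit (ℓ : ℕ) (x : ℝ) : ℕ := (⌊(2 : ℝ) ^ ℓ * x⌋).toNat % 2

noncomputable def walsh (k : ℕ) (x : ℝ) : ℝ :=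
  (-1 : ℝ) ^ (∑ ℓ ∈ Finset.range (k + 1), (k / 2 ^ ℓ % 2) * binDigit (ℓ + 1) x)

noncomputable def Sser (x : ℝ) : ℝ := ∑' a : ℕ, walsh (2 ^ a) x * (2 : ℝ) ^ (-(3 * (a : ℤ)))

open Filter Topology

/-!
Write `S y = ∑ₐ (-1) ^ d_{a+1}(y) 8⁻ᵃ`. Whenever the first `n` digits of `y` and `z` agree,
`|S y - S z| ≤ (16/7) 8⁻ⁿ`.

Right of `x = j / 2 ^ m`, for `0 < h < 2⁻ᵐ`: `x + h` and `x` share every digit `ℓ` with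
`2 ^ ℓ * h < 1`, because `⌊2 ^ N (x + h)⌋ = ⌊2 ^ N x⌋` for `N = max ℓ m`. With `n` minimal such
that `2⁻⁽ⁿ⁺¹⁾ ≤ h`, this gives `|S (x + h) - S x| ≤ (16/7) 8⁻ⁿ ≤ (128/7) h³`.

Left of `x = k / 2 ^ (m + 1)` with `k` odd and `2 ^ (m + 1) * h ≤ 1`: `⌊2 ^ (m + 1) (x - h)⌋ = k - 1`.
Since `k` is odd, the first `m` digits are unchanged and digit `m + 1` drops from `1` to `0`.
That term contributes `-2 · 8⁻ᵐ`, which beats the tail `(2/7) · 8⁻ᵐ`, so the difference quotient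
is at most `-8⁻ᵐ / h`.
-/

lemma two_pow_div_two_pow_mod_two (a ℓ : ℕ) : 2 ^ a / 2 ^ ℓ % 2 = if a = ℓ then 1 else 0 := by
  have h := Nat.testBit_two_pow (n := a) (m := ℓ)
  rw [Nat.testBit_eq_decide_div_mod_eq] at h
  split_ifs <;> simp_all

lemma walsh_two_pow (a : ℕ) (x : ℝ) : walsh (2 ^ a) x = (-1) ^ binDigit (a + 1) x := by
  have ha : a ∈ Finset.range (2 ^ a + 1) :=
    Finset.mem_range.2 (Nat.lt_succ_of_lt Nat.lt_two_pow_self)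
  simp [walsh, two_pow_div_two_pow_mod_two, ite_mul, ha]

lemma floor_two_pow_mul_eq_ediv {ℓ N : ℕ} (hℓN : ℓ ≤ N) (y : ℝ) :
    ⌊(2 : ℝ) ^ ℓ * y⌋ = ⌊(2 : ℝ) ^ N * y⌋ / 2 ^ (N - ℓ) := by
  have h := Int.floor_div_natCast ((2 : ℝ) ^ N * y) (2 ^ (N - ℓ))
  push_cast at h
  rw [← h]
  congr 1
  rw [eq_div_iff (by positivity), mul_right_comm, ← pow_add, Nat.add_sub_cancel' hℓN]

lemma binDigit_eq_of_floor_eq {ℓ N : ℕ} (hℓN : ℓ ≤ N) {y z : ℝ}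
    (h : ⌊(2 : ℝ) ^ N * y⌋ = ⌊(2 : ℝ) ^ N * z⌋) : binDigit ℓ y = binDigit ℓ z := by
  rw [binDigit, binDigit, floor_two_pow_mul_eq_ediv hℓN, floor_two_pow_mul_eq_ediv hℓN z, h]

noncomputable def SserTerm (y : ℝ) (a : ℕ) : ℝ := (-1) ^ binDigit (a + 1) y * (1 / 8) ^ a

lemma abs_SserTerm (y : ℝ) (a : ℕ) : |SserTerm y a| = (1 / 8) ^ a := by
  simp [SserTerm, abs_mul]

lemma summable_SserTerm (y : ℝ) : Summable (SserTerm y) :=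
  .of_norm_bounded (summable_geometric_of_lt_one (by norm_num) (by norm_num))
    fun a => (abs_SserTerm y a).le

lemma Sser_eq_tsum_SserTerm (y : ℝ) : Sser y = ∑' a, SserTerm y a := by
  refine tsum_congr fun a => ?_
  rw [walsh_two_pow, SserTerm, zpow_neg, show 3 * (a : ℤ) = ((3 * a : ℕ) : ℤ) by push_cast; ring,
    zpow_natCast, pow_mul, one_div, inv_pow]
  norm_num

lemma abs_Sser_sub_sub_sum_le (y z : ℝ) (n : ℕ) :
    |Sser y - Sser z - ∑ a ∈ Finset.range n, (SserTerm y a - SserTerm z a)| ≤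
      16 / 7 * (1 / 8) ^ n := by
  have hsum := ((summable_SserTerm y).sub (summable_SserTerm z)).sum_add_tsum_nat_add n
  rw [Sser_eq_tsum_SserTerm, Sser_eq_tsum_SserTerm, ← (summable_SserTerm y).tsum_sub
    (summable_SserTerm z), ← hsum, add_sub_cancel_left, ← Real.norm_eq_abs]
  have hgeom : HasSum (fun a : ℕ => 2 * (1 / 8) ^ n * (1 / 8 : ℝ) ^ a)
      (2 * (1 / 8) ^ n * (1 - 1 / 8)⁻¹) :=
    (hasSum_geometric_of_lt_one (by norm_num) (by norm_num)).mul_left _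
  refine (tsum_of_norm_bounded hgeom fun a => ?_).trans_eq (by norm_num; ring)
  calc ‖SserTerm y (a + n) - SserTerm z (a + n)‖
      ≤ |SserTerm y (a + n)| + |SserTerm z (a + n)| := norm_sub_le _ _
    _ = 2 * (1 / 8) ^ n * (1 / 8) ^ a := by rw [abs_SserTerm, abs_SserTerm, pow_add]; ring

lemma abs_Sser_sub_le_of_binDigit_eq {y z : ℝ} {n : ℕ}
    (h : ∀ a < n, binDigit (a + 1) y = binDigit (a + 1) z) :
    |Sser y - Sser z| ≤ 16 / 7 * (1 / 8) ^ n := by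
  have hzero : ∑ a ∈ Finset.range n, (SserTerm y a - SserTerm z a) = 0 :=
    Finset.sum_eq_zero fun a ha => by rw [SserTerm, SserTerm, h a (Finset.mem_range.1 ha), sub_self]
  simpa [hzero] using abs_Sser_sub_sub_sum_le y z n

lemma two_pow_mul_div_two_pow {m N : ℕ} (hmN : m ≤ N) (j : ℤ) :
    (2 : ℝ) ^ N * (j / 2 ^ m) = ((j * 2 ^ (N - m) : ℤ) : ℝ) := by
  rw [Int.cast_mul, Int.cast_pow, Int.cast_ofNat, ← Nat.sub_add_cancel hmN, pow_add,
    Nat.add_sub_cancel]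
  field_simp

lemma floor_two_pow_mul_add_eq {N : ℕ} {x h : ℝ} {p : ℤ} (hx : (2 : ℝ) ^ N * x = p)
    (h0 : 0 ≤ h) (h1 : (2 : ℝ) ^ N * h < 1) :
    ⌊(2 : ℝ) ^ N * (x + h)⌋ = ⌊(2 : ℝ) ^ N * x⌋ := by
  rw [mul_add, hx, Int.floor_intCast_add, Int.floor_intCast,
    Int.floor_eq_zero_iff.2 ⟨by positivity, h1⟩, add_zero]

lemma abs_Sser_add_sub_le (j : ℤ) (m : ℕ) {h : ℝ} (h0 : 0 < h) (hm : (2 : ℝ) ^ m * h < 1) :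
    |Sser (j / 2 ^ m + h) - Sser (j / 2 ^ m)| ≤ 128 / 7 * h ^ 3 := by
  have hex : ∃ n : ℕ, (1 / 2 : ℝ) ^ (n + 1) ≤ h := by
    obtain ⟨n, hn⟩ := exists_pow_lt_of_lt_one h0 (by norm_num : (1 / 2 : ℝ) < 1)
    exact ⟨n, (pow_le_pow_of_le_one (by norm_num) (by norm_num) n.le_succ).trans hn.le⟩
  set n := Nat.find hex
  have hagree : ∀ a < n, binDigit (a + 1) (j / 2 ^ m + h) = binDigit (a + 1) (j / 2 ^ m) := by
    intro a ha
    have hsmall : (2 : ℝ) ^ max (a + 1) m * h < 1 := by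
      rcases max_choice (a + 1) m with hmax | hmax <;> rw [hmax]
      · calc (2 : ℝ) ^ (a + 1) * h < 2 ^ (a + 1) * (1 / 2) ^ (a + 1) :=
            mul_lt_mul_of_pos_left (not_le.1 (Nat.find_min hex ha)) (by positivity)
        _ = 1 := by rw [← mul_pow]; norm_num
      · exact hm
    exact binDigit_eq_of_floor_eq (le_max_left _ _) (floor_two_pow_mul_add_eq
      (two_pow_mul_div_two_pow (le_max_right _ _) j) h0.le hsmall)
  calc |Sser (j / 2 ^ m + h) - Sser (j / 2 ^ m)| ≤ 16 / 7 * (1 / 8) ^ n :=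
        abs_Sser_sub_le_of_binDigit_eq hagree
    _ = 128 / 7 * ((1 / 2) ^ (n + 1)) ^ 3 := by
      rw [← pow_mul, pow_mul', pow_succ]; norm_num; ring
    _ ≤ 128 / 7 * h ^ 3 := by gcongr; exact Nat.find_spec hex

lemma Sser_sub_Sser_sub_le {k : ℕ} (hk : Odd k) (m : ℕ) {h : ℝ} (h0 : 0 < h)
    (hm : (2 : ℝ) ^ (m + 1) * h ≤ 1) :
    Sser (k / 2 ^ (m + 1)) - Sser (k / 2 ^ (m + 1) - h) ≤ -(1 / 8) ^ m := by
  set x : ℝ := k / 2 ^ (m + 1)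
  have hx : (2 : ℝ) ^ (m + 1) * x = k := by simp only [x]; field_simp
  have hfloor_x : ⌊(2 : ℝ) ^ (m + 1) * x⌋ = k := by rw [hx, Int.floor_natCast]
  have hfloor_xh : ⌊(2 : ℝ) ^ (m + 1) * (x - h)⌋ = k - 1 := by
    rw [Int.floor_eq_iff, mul_sub, hx]
    push_cast
    constructor <;> nlinarith [pow_pos (two_pos : (0 : ℝ) < 2) (m + 1)]
  obtain ⟨r, rfl⟩ := hk
  have hagree : ∀ a < m, binDigit (a + 1) x = binDigit (a + 1) (x - h) := by
    intro a ha
    refine binDigit_eq_of_floor_eq ha (N := m) ?_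
    rw [floor_two_pow_mul_eq_ediv (Nat.le_add_right m 1),
      floor_two_pow_mul_eq_ediv (Nat.le_add_right m 1) (x - h), hfloor_x, hfloor_xh,
      Nat.add_sub_cancel_left, pow_one]
    push_cast
    omega
  have hdigit_x : binDigit (m + 1) x = 1 := by
    rw [binDigit, hfloor_x]; omega
  have hdigit_xh : binDigit (m + 1) (x - h) = 0 := by
    rw [binDigit, hfloor_xh]; omega
  have hsum :
      ∑ a ∈ Finset.range (m + 1), (SserTerm x a - SserTerm (x - h) a) = -2 * (1 / 8) ^ m := by
    rw [Finset.sum_range_succ, Finset.sum_eq_zero fun a ha => by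
      rw [SserTerm, SserTerm, hagree a (Finset.mem_range.1 ha), sub_self]]
    simp only [SserTerm, hdigit_x, hdigit_xh]
    ring
  have htail := (abs_le.1 (abs_Sser_sub_sub_sum_le x (x - h) (m + 1))).2
  rw [hsum, pow_succ] at htail
  nlinarith [pow_pos (by norm_num : (0 : ℝ) < 1 / 8) m]

lemma tendsto_slope_Sser_right (j : ℤ) (m : ℕ) :
    Tendsto (fun h => (Sser (j / 2 ^ m + h) - Sser (j / 2 ^ m)) / h) (𝓝[>] 0) (𝓝 0) := by
  have hbound : Tendsto (fun h : ℝ => 128 / 7 * h ^ 2) (𝓝[>] 0) (𝓝 0) :=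
    ((continuous_const.mul (continuous_pow 2)).tendsto' 0 0 (by simp)).mono_left
      nhdsWithin_le_nhds
  refine squeeze_zero_norm' ?_ hbound
  filter_upwards [Ioo_mem_nhdsGT (by positivity : (0 : ℝ) < 1 / 2 ^ m)] with h ⟨h0, hm⟩
  rw [lt_div_iff₀ (by positivity), mul_comm] at hm
  rw [norm_div, Real.norm_eq_abs, Real.norm_of_nonneg h0.le, div_le_iff₀ h0]
  calc _ ≤ 128 / 7 * h ^ 3 := abs_Sser_add_sub_le j m h0 hm
    _ = _ := by ring

lemma tendsto_slope_Sser_left {k : ℕ} (hk : Odd k) (m : ℕ) :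
    Tendsto (fun h => (Sser (k / 2 ^ (m + 1)) - Sser (k / 2 ^ (m + 1) - h)) / h) (𝓝[>] 0)
      atBot := by
  have hbound : Tendsto (fun h : ℝ => -(1 / 8) ^ m * h⁻¹) (𝓝[>] 0) atBot :=
    tendsto_inv_nhdsGT_zero.const_mul_atTop_of_neg (by simp)
  refine tendsto_atBot_mono' _ ?_ hbound
  filter_upwards [Ioo_mem_nhdsGT (by positivity : (0 : ℝ) < 1 / 2 ^ (m + 1))] with h ⟨h0, hm⟩
  rw [lt_div_iff₀ (by positivity), mul_comm] at hm
  rw [← div_eq_mul_inv]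
  exact div_le_div_of_nonneg_right (Sser_sub_Sser_sub_le hk m h0 hm.le) h0.le

lemma exists_odd_eq_div_two_pow_succ {x : ℝ} (hx : x ∈ Set.Ioo 0 1) {j mm : ℕ}
    (hj : x = j / 2 ^ mm) : ∃ k m : ℕ, Odd k ∧ x = k / 2 ^ (m + 1) := by
  have hj0 : j ≠ 0 := by rintro rfl; simp [hj] at hx
  obtain ⟨e, k, hk, rfl⟩ := Nat.exists_eq_two_pow_mul_odd hj0
  have he : e < mm := by
    by_contra! hme
    have : (1 : ℝ) ≤ x := by
      rw [hj, le_div_iff₀ (by positivity), one_mul, ← Nat.sub_add_cancel hme, pow_add]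
      push_cast
      have hk1 : (1 : ℝ) ≤ k := by exact_mod_cast hk.pos
      have he1 : (1 : ℝ) ≤ 2 ^ (e - mm) := one_le_pow₀ one_le_two
      calc (2 : ℝ) ^ mm = 1 * 2 ^ mm * 1 := by ring
        _ ≤ 2 ^ (e - mm) * 2 ^ mm * k := by gcongr
    exact absurd hx.2 this.not_gt
  obtain ⟨m, rfl⟩ := Nat.exists_eq_add_of_lt he
  refine ⟨k, m, hk, ?_⟩
  rw [hj, pow_add, pow_add]
  push_cast
  field_simp
  ring

theorem stmt_12 :
    (∀ x : ℝ, x ∈ Set.Ico (0 : ℝ) 1 → (∃ j mm : ℕ, x = (j : ℝ) / 2 ^ mm) →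
      Filter.Tendsto (fun h : ℝ => (Sser (x + h) - Sser x) / h)
        (nhdsWithin 0 (Set.Ioi 0)) (nhds 0)) ∧
    (∀ x : ℝ, x ∈ Set.Ioo (0 : ℝ) 1 → (∃ j mm : ℕ, x = (j : ℝ) / 2 ^ mm) →
      Filter.Tendsto (fun h : ℝ => (Sser x - Sser (x - h)) / h)
        (nhdsWithin 0 (Set.Ioi 0)) Filter.atBot) := by
  refine ⟨fun x _ ⟨j, m, hx⟩ => ?_, fun x hx ⟨j, mm, hj⟩ => ?_⟩
  · simpa [hx] using tendsto_slope_Sser_right j m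
  · obtain ⟨k, m, hk, rfl⟩ := exists_odd_eq_div_two_pow_succ hx hj
    exact tendsto_slope_Sser_left hk m
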